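/- Let D ⊆ ℝ² be open and connected, E : D → ℝ smooth positive, a : D → ℝ smooth, G : D → ℝ smooth positive, and let l, n : D → ℝ⁴ be smooth maps with ⟨l,l⟩ = 1, ⟨l_x,l_x⟩ = E, ⟨l_y,l_y⟩ = G, ⟨l_x,l_y⟩ = 0, ⟨n,n⟩ = 1, ⟨n,l⟩ = ⟨n,l_x⟩ = ⟨n,l_y⟩ = 0, satisfying the derivative formulas l_{xx} = (E_x/2E)l_x − (E_y/2E)l_y − E·l + a·n, l_{xy} = (E_y/2E)l_x + (G_x/2G)l_y, l_{yy} = −(G_x/2G)l_x + (G_y/2G)l_y − G·l − a·n, n_x = −(a/E)l_x, n_y = (a/G)l_y. Then a_x = 0 and a_y = 0 on D (so a is constant), and (E − G)·E_y = 0 and (E − G)·G_x = 0 on D. -/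

import Mathlib

/-!
Instead of differentiating the frame expansions of `l_xx`, `l_xy`, `l_yy` as vectors, pair them
with `w = n` and `w = l`. By symmetry of third derivatives,
`∂_y ⟪w, l_xx⟫ - ∂_x ⟪w, l_xy⟫ = ⟪w_y, l_xx⟫ - ⟪w_x, l_xy⟫`, and likewise for `l_xy`, `l_yy`.
The derivative formulas and the orthogonality relations identify both sides: on the left
`⟪n, l_xx⟫ = a`, `⟪l, l_xx⟫ = -E`, `⟪n, l_xy⟫ = ⟪l, l_xy⟫ = 0`, ...; on the right
`⟪l_y, l_xx⟫ = -E_y G / 2E`, `⟪l_x, l_xy⟫ = E_y / 2`, .... This yields the four identities, and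
`a`, having vanishing derivative on a connected open set, is constant.
-/

open Real
open scoped InnerProductSpace

noncomputable section

abbrev E4 := EuclideanSpace ℝ (Fin 4)

def pu {F : Type*} [NormedAddCommGroup F] [NormedSpace ℝ F]
    (f : ℝ × ℝ → F) (p : ℝ × ℝ) : F := fderiv ℝ f p (1, 0)

def pv {F : Type*} [NormedAddCommGroup F] [NormedSpace ℝ F]
    (f : ℝ × ℝ → F) (p : ℝ × ℝ) : F := fderiv ℝ f p (0, 1)

section PartialDerivatives

variable {F : Type*} [NormedAddCommGroup F] [NormedSpace ℝ F]
  {f g : ℝ × ℝ → F} {D : Set (ℝ × ℝ)} {p : ℝ × ℝ}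

lemma pu_congr_of_eqOn (hD : IsOpen D) (h : Set.EqOn f g D) (hp : p ∈ D) :
    pu f p = pu g p := by
  rw [pu, pu, (h.eventuallyEq_of_mem (hD.mem_nhds hp)).fderiv_eq]

lemma pv_congr_of_eqOn (hD : IsOpen D) (h : Set.EqOn f g D) (hp : p ∈ D) :
    pv f p = pv g p := by
  rw [pv, pv, (h.eventuallyEq_of_mem (hD.mem_nhds hp)).fderiv_eq]

lemma pu_const (c : F) (p : ℝ × ℝ) : pu (fun _ => c) p = 0 := by
  simp [pu]

lemma pv_const (c : F) (p : ℝ × ℝ) : pv (fun _ => c) p = 0 := by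
  simp [pv]

lemma pu_neg (f : ℝ × ℝ → F) (p : ℝ × ℝ) : pu (fun q => -f q) p = -pu f p := by
  simp [pu, fderiv_fun_neg]

lemma pv_neg (f : ℝ × ℝ → F) (p : ℝ × ℝ) : pv (fun q => -f q) p = -pv f p := by
  simp [pv, fderiv_fun_neg]

lemma ContDiffOn.pu {n : WithTop ℕ∞} (hf : ContDiffOn ℝ (n + 1) f D) (hD : IsOpen D) :
    ContDiffOn ℝ n (pu f) D :=
  (hf.fderiv_of_isOpen hD le_rfl).clm_apply contDiffOn_const

lemma ContDiffOn.pv {n : WithTop ℕ∞} (hf : ContDiffOn ℝ (n + 1) f D) (hD : IsOpen D) :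
    ContDiffOn ℝ n (pv f) D :=
  (hf.fderiv_of_isOpen hD le_rfl).clm_apply contDiffOn_const

lemma ContDiffAt.differentiableAt_fderiv (hf : ContDiffAt ℝ 2 f p) :
    DifferentiableAt ℝ (fderiv ℝ f) p :=
  (hf.fderiv_right (m := 1) le_rfl).differentiableAt one_ne_zero

lemma ContDiffAt.fderiv_apply_comm (hf : ContDiffAt ℝ 2 f p) (v w : ℝ × ℝ) :
    fderiv ℝ (fun q => fderiv ℝ f q v) p w = fderiv ℝ (fun q => fderiv ℝ f q w) p v := by
  have hsymm := hf.isSymmSndFDerivAt (by simp [minSmoothness_of_isRCLikeNormedField])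
  simp only [fderiv_clm_apply hf.differentiableAt_fderiv (differentiableAt_const _),
    fderiv_fun_const, Pi.zero_apply, ContinuousLinearMap.comp_zero, zero_add,
    ContinuousLinearMap.flip_apply]
  exact hsymm w v

lemma ContDiffAt.pv_pu_comm (hf : ContDiffAt ℝ 2 f p) : pv (pu f) p = pu (pv f) p :=
  hf.fderiv_apply_comm (1, 0) (0, 1)

lemma ContDiffAt.differentiableAt_pu (hf : ContDiffAt ℝ 2 f p) :
    DifferentiableAt ℝ (pu f) p :=
  hf.differentiableAt_fderiv.clm_apply (differentiableAt_const _)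

lemma ContDiffAt.differentiableAt_pv (hf : ContDiffAt ℝ 2 f p) :
    DifferentiableAt ℝ (pv f) p :=
  hf.differentiableAt_fderiv.clm_apply (differentiableAt_const _)

lemma eq_of_pu_eq_zero_of_pv_eq_zero {f : ℝ × ℝ → ℝ} (hD : IsOpen D) (hDconn : IsPreconnected D)
    (hf : DifferentiableOn ℝ f D) (hfu : ∀ p ∈ D, pu f p = 0) (hfv : ∀ p ∈ D, pv f p = 0)
    {p q : ℝ × ℝ} (hp : p ∈ D) (hq : q ∈ D) : f p = f q := by
  refine hD.is_const_of_fderiv_eq_zero hDconn hf (fun x hx => ?_) hp hq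
  exact ContinuousLinearMap.prod_ext
    (ContinuousLinearMap.ext_ring (hfu x hx)) (ContinuousLinearMap.ext_ring (hfv x hx))

end PartialDerivatives

section InnerProduct

variable {F : Type*} [NormedAddCommGroup F] [InnerProductSpace ℝ F]
  {f g : ℝ × ℝ → F} {D : Set (ℝ × ℝ)} {p : ℝ × ℝ}

lemma pu_inner (hf : DifferentiableAt ℝ f p) (hg : DifferentiableAt ℝ g p) :
    pu (fun q => ⟪f q, g q⟫_ℝ) p = ⟪pu f p, g p⟫_ℝ + ⟪f p, pu g p⟫_ℝ := by
  rw [pu, fderiv_inner_apply (𝕜 := ℝ) hf hg, add_comm]; rfl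

lemma pv_inner (hf : DifferentiableAt ℝ f p) (hg : DifferentiableAt ℝ g p) :
    pv (fun q => ⟪f q, g q⟫_ℝ) p = ⟪pv f p, g p⟫_ℝ + ⟪f p, pv g p⟫_ℝ := by
  rw [pv, fderiv_inner_apply (𝕜 := ℝ) hf hg, add_comm]; rfl

lemma inner_pu_eq_zero_of_inner_self_eq {c : ℝ} (hD : IsOpen D) (hf : DifferentiableAt ℝ f p)
    (h : ∀ q ∈ D, ⟪f q, f q⟫_ℝ = c) (hp : p ∈ D) : ⟪f p, pu f p⟫_ℝ = 0 := by
  have hc := pu_congr_of_eqOn hD (g := fun _ => c) h hp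
  rw [pu_inner hf hf, pu_const, real_inner_comm] at hc
  linarith

lemma inner_pv_eq_zero_of_inner_self_eq {c : ℝ} (hD : IsOpen D) (hf : DifferentiableAt ℝ f p)
    (h : ∀ q ∈ D, ⟪f q, f q⟫_ℝ = c) (hp : p ∈ D) : ⟪f p, pv f p⟫_ℝ = 0 := by
  have hc := pv_congr_of_eqOn hD (g := fun _ => c) h hp
  rw [pv_inner hf hf, pv_const, real_inner_comm] at hc
  linarith

lemma pv_inner_pu_sub_pu_inner_pv {w : ℝ × ℝ → F} (hw : DifferentiableAt ℝ w p)
    (hf : ContDiffAt ℝ 2 f p) :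
    pv (fun q => ⟪w q, pu f q⟫_ℝ) p - pu (fun q => ⟪w q, pv f q⟫_ℝ) p =
      ⟪pv w p, pu f p⟫_ℝ - ⟪pu w p, pv f p⟫_ℝ := by
  rw [pv_inner hw hf.differentiableAt_pu, pu_inner hw hf.differentiableAt_pv, hf.pv_pu_comm]
  ring

end InnerProduct

structure IsMinimalPrincipalParam {F : Type*} [NormedAddCommGroup F] [InnerProductSpace ℝ F]
    (D : Set (ℝ × ℝ)) (E G a : ℝ × ℝ → ℝ) (l n : ℝ × ℝ → F) : Prop where
  isOpen : IsOpen D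
  E_pos : ∀ p ∈ D, 0 < E p
  G_pos : ∀ p ∈ D, 0 < G p
  contDiffOn_l : ContDiffOn ℝ 3 l D
  differentiableOn_n : DifferentiableOn ℝ n D
  inner_l_l : ∀ p ∈ D, ⟪l p, l p⟫_ℝ = 1
  inner_pu_l_pu_l : ∀ p ∈ D, ⟪pu l p, pu l p⟫_ℝ = E p
  inner_pv_l_pv_l : ∀ p ∈ D, ⟪pv l p, pv l p⟫_ℝ = G p
  inner_pu_l_pv_l : ∀ p ∈ D, ⟪pu l p, pv l p⟫_ℝ = 0
  inner_n_n : ∀ p ∈ D, ⟪n p, n p⟫_ℝ = 1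
  inner_n_l : ∀ p ∈ D, ⟪n p, l p⟫_ℝ = 0
  inner_n_pu_l : ∀ p ∈ D, ⟪n p, pu l p⟫_ℝ = 0
  inner_n_pv_l : ∀ p ∈ D, ⟪n p, pv l p⟫_ℝ = 0
  pu_pu_l : ∀ p ∈ D, pu (pu l) p =
    (pu E p / (2 * E p)) • pu l p - (pv E p / (2 * E p)) • pv l p - E p • l p + a p • n p
  pv_pu_l : ∀ p ∈ D, pv (pu l) p =
    (pv E p / (2 * E p)) • pu l p + (pu G p / (2 * G p)) • pv l p
  pv_pv_l : ∀ p ∈ D, pv (pv l) p =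
    -((pu G p / (2 * G p)) • pu l p) + (pv G p / (2 * G p)) • pv l p - G p • l p - a p • n p
  pu_n : ∀ p ∈ D, pu n p = -((a p / E p) • pu l p)
  pv_n : ∀ p ∈ D, pv n p = (a p / G p) • pv l p

namespace IsMinimalPrincipalParam

variable {F : Type*} [NormedAddCommGroup F] [InnerProductSpace ℝ F]
  {D : Set (ℝ × ℝ)} {E G a : ℝ × ℝ → ℝ} {l n : ℝ × ℝ → F} {p : ℝ × ℝ}

lemma contDiffAt_l (S : IsMinimalPrincipalParam D E G a l n) (hp : p ∈ D) :
    ContDiffAt ℝ 3 l p :=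
  S.contDiffOn_l.contDiffAt (S.isOpen.mem_nhds hp)

lemma contDiffAt_pu_l (S : IsMinimalPrincipalParam D E G a l n) (hp : p ∈ D) :
    ContDiffAt ℝ 2 (pu l) p :=
  (S.contDiffOn_l.pu S.isOpen).contDiffAt (S.isOpen.mem_nhds hp)

lemma contDiffAt_pv_l (S : IsMinimalPrincipalParam D E G a l n) (hp : p ∈ D) :
    ContDiffAt ℝ 2 (pv l) p :=
  (S.contDiffOn_l.pv S.isOpen).contDiffAt (S.isOpen.mem_nhds hp)

lemma differentiableAt_n (S : IsMinimalPrincipalParam D E G a l n) (hp : p ∈ D) :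
    DifferentiableAt ℝ n p :=
  S.differentiableOn_n.differentiableAt (S.isOpen.mem_nhds hp)

lemma inner_l_pu_l (S : IsMinimalPrincipalParam D E G a l n) (hp : p ∈ D) :
    ⟪l p, pu l p⟫_ℝ = 0 :=
  inner_pu_eq_zero_of_inner_self_eq S.isOpen ((S.contDiffAt_l hp).differentiableAt (by norm_num))
    S.inner_l_l hp

lemma inner_l_pv_l (S : IsMinimalPrincipalParam D E G a l n) (hp : p ∈ D) :
    ⟪l p, pv l p⟫_ℝ = 0 :=
  inner_pv_eq_zero_of_inner_self_eq S.isOpen ((S.contDiffAt_l hp).differentiableAt (by norm_num))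
    S.inner_l_l hp

lemma inner_l_n (S : IsMinimalPrincipalParam D E G a l n) (hp : p ∈ D) : ⟪l p, n p⟫_ℝ = 0 := by
  rw [real_inner_comm, S.inner_n_l p hp]

lemma inner_n_pu_pu_l (S : IsMinimalPrincipalParam D E G a l n) (hp : p ∈ D) :
    ⟪n p, pu (pu l) p⟫_ℝ = a p := by
  simp only [S.pu_pu_l p hp, inner_add_right, inner_sub_right, real_inner_smul_right,
    S.inner_n_pu_l p hp, S.inner_n_pv_l p hp, S.inner_n_l p hp, S.inner_n_n p hp]
  ring

lemma inner_n_pv_pu_l (S : IsMinimalPrincipalParam D E G a l n) (hp : p ∈ D) :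
    ⟪n p, pv (pu l) p⟫_ℝ = 0 := by
  simp only [S.pv_pu_l p hp, inner_add_right, real_inner_smul_right,
    S.inner_n_pu_l p hp, S.inner_n_pv_l p hp]
  ring

lemma inner_n_pv_pv_l (S : IsMinimalPrincipalParam D E G a l n) (hp : p ∈ D) :
    ⟪n p, pv (pv l) p⟫_ℝ = -a p := by
  simp only [S.pv_pv_l p hp, inner_add_right, inner_sub_right, inner_neg_right,
    real_inner_smul_right, S.inner_n_pu_l p hp, S.inner_n_pv_l p hp, S.inner_n_l p hp,
    S.inner_n_n p hp]
  ring

lemma inner_l_pu_pu_l (S : IsMinimalPrincipalParam D E G a l n) (hp : p ∈ D) :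
    ⟪l p, pu (pu l) p⟫_ℝ = -E p := by
  simp only [S.pu_pu_l p hp, inner_add_right, inner_sub_right, real_inner_smul_right,
    S.inner_l_pu_l hp, S.inner_l_pv_l hp, S.inner_l_n hp, S.inner_l_l p hp]
  ring

lemma inner_l_pv_pu_l (S : IsMinimalPrincipalParam D E G a l n) (hp : p ∈ D) :
    ⟪l p, pv (pu l) p⟫_ℝ = 0 := by
  simp only [S.pv_pu_l p hp, inner_add_right, real_inner_smul_right,
    S.inner_l_pu_l hp, S.inner_l_pv_l hp]
  ring

lemma inner_l_pv_pv_l (S : IsMinimalPrincipalParam D E G a l n) (hp : p ∈ D) :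
    ⟪l p, pv (pv l) p⟫_ℝ = -G p := by
  simp only [S.pv_pv_l p hp, inner_add_right, inner_sub_right, inner_neg_right,
    real_inner_smul_right, S.inner_l_pu_l hp, S.inner_l_pv_l hp, S.inner_l_n hp,
    S.inner_l_l p hp]
  ring

lemma inner_pv_l_pu_pu_l (S : IsMinimalPrincipalParam D E G a l n) (hp : p ∈ D) :
    ⟪pv l p, pu (pu l) p⟫_ℝ = -(pv E p / (2 * E p)) * G p := by
  simp only [S.pu_pu_l p hp, inner_add_right, inner_sub_right, real_inner_smul_right,
    real_inner_comm (pu l p) (pv l p), real_inner_comm (l p) (pv l p),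
    real_inner_comm (n p) (pv l p), S.inner_pu_l_pv_l p hp, S.inner_pv_l_pv_l p hp,
    S.inner_l_pv_l hp, S.inner_n_pv_l p hp]
  ring

lemma inner_pu_l_pv_pu_l (S : IsMinimalPrincipalParam D E G a l n) (hp : p ∈ D) :
    ⟪pu l p, pv (pu l) p⟫_ℝ = pv E p / 2 := by
  have hE := (S.E_pos p hp).ne'
  simp only [S.pv_pu_l p hp, inner_add_right, real_inner_smul_right,
    S.inner_pu_l_pu_l p hp, S.inner_pu_l_pv_l p hp]
  field_simp
  ring

lemma inner_pu_l_pv_pv_l (S : IsMinimalPrincipalParam D E G a l n) (hp : p ∈ D) :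
    ⟪pu l p, pv (pv l) p⟫_ℝ = -(pu G p / (2 * G p)) * E p := by
  simp only [S.pv_pv_l p hp, inner_add_right, inner_sub_right, inner_neg_right,
    real_inner_smul_right, real_inner_comm (l p) (pu l p), real_inner_comm (n p) (pu l p),
    S.inner_pu_l_pu_l p hp, S.inner_pu_l_pv_l p hp, S.inner_l_pu_l hp, S.inner_n_pu_l p hp]
  ring

lemma inner_pv_l_pv_pu_l (S : IsMinimalPrincipalParam D E G a l n) (hp : p ∈ D) :
    ⟪pv l p, pv (pu l) p⟫_ℝ = pu G p / 2 := by
  have hG := (S.G_pos p hp).ne'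
  simp only [S.pv_pu_l p hp, inner_add_right, real_inner_smul_right,
    real_inner_comm (pu l p) (pv l p), S.inner_pu_l_pv_l p hp, S.inner_pv_l_pv_l p hp]
  field_simp
  ring

lemma pu_pv_l (S : IsMinimalPrincipalParam D E G a l n) (hp : p ∈ D) :
    pu (pv l) p = pv (pu l) p :=
  ((S.contDiffAt_l hp).of_le (by norm_num)).pv_pu_comm.symm

theorem pv_a_eq_zero (S : IsMinimalPrincipalParam D E G a l n) (hp : p ∈ D) : pv a p = 0 := by
  have key := pv_inner_pu_sub_pu_inner_pv (S.differentiableAt_n hp) (S.contDiffAt_pu_l hp)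
  rw [pv_congr_of_eqOn S.isOpen (g := a) (fun q hq => S.inner_n_pu_pu_l hq) hp,
    pu_congr_of_eqOn S.isOpen (g := fun _ => 0) (fun q hq => S.inner_n_pv_pu_l hq) hp, pu_const,
    S.pv_n p hp, S.pu_n p hp, inner_neg_left, real_inner_smul_left, real_inner_smul_left,
    S.inner_pv_l_pu_pu_l hp, S.inner_pu_l_pv_pu_l hp] at key
  have hE := (S.E_pos p hp).ne'
  have hG := (S.G_pos p hp).ne'
  field_simp at key
  simpa [hE] using key

theorem pu_a_eq_zero (S : IsMinimalPrincipalParam D E G a l n) (hp : p ∈ D) : pu a p = 0 := by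
  have key := pv_inner_pu_sub_pu_inner_pv (S.differentiableAt_n hp) (S.contDiffAt_pv_l hp)
  rw [pv_congr_of_eqOn S.isOpen (g := fun _ => 0)
      (fun q hq => (congrArg _ (S.pu_pv_l hq)).trans (S.inner_n_pv_pu_l hq)) hp, pv_const,
    pu_congr_of_eqOn S.isOpen (g := fun q => -a q) (fun q hq => S.inner_n_pv_pv_l hq) hp, pu_neg,
    S.pv_n p hp, S.pu_n p hp, S.pu_pv_l hp, inner_neg_left, real_inner_smul_left,
    real_inner_smul_left, S.inner_pv_l_pv_pu_l hp, S.inner_pu_l_pv_pv_l hp] at key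
  have hE := (S.E_pos p hp).ne'
  have hG := (S.G_pos p hp).ne'
  field_simp at key
  simpa [hG] using key

theorem sub_mul_pv_E_eq_zero (S : IsMinimalPrincipalParam D E G a l n) (hp : p ∈ D) :
    (E p - G p) * pv E p = 0 := by
  have key := pv_inner_pu_sub_pu_inner_pv
    ((S.contDiffAt_l hp).differentiableAt (by norm_num)) (S.contDiffAt_pu_l hp)
  rw [pv_congr_of_eqOn S.isOpen (fun q hq => S.inner_l_pu_pu_l hq) hp, pv_neg,
    pu_congr_of_eqOn S.isOpen (g := fun _ => 0) (fun q hq => S.inner_l_pv_pu_l hq) hp, pu_const,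
    S.inner_pv_l_pu_pu_l hp, S.inner_pu_l_pv_pu_l hp] at key
  have hE := (S.E_pos p hp).ne'
  field_simp at key
  linarith

theorem sub_mul_pu_G_eq_zero (S : IsMinimalPrincipalParam D E G a l n) (hp : p ∈ D) :
    (E p - G p) * pu G p = 0 := by
  have key := pv_inner_pu_sub_pu_inner_pv
    ((S.contDiffAt_l hp).differentiableAt (by norm_num)) (S.contDiffAt_pv_l hp)
  rw [pv_congr_of_eqOn S.isOpen (g := fun _ => 0)
      (fun q hq => (congrArg _ (S.pu_pv_l hq)).trans (S.inner_l_pv_pu_l hq)) hp, pv_const,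
    pu_congr_of_eqOn S.isOpen (fun q hq => S.inner_l_pv_pv_l hq) hp, pu_neg,
    S.pu_pv_l hp, S.inner_pv_l_pv_pu_l hp, S.inner_pu_l_pv_pv_l hp] at key
  have hG := (S.G_pos p hp).ne'
  field_simp at key
  linarith

end IsMinimalPrincipalParam

theorem stmt_5_general (D : Set (ℝ × ℝ)) (hD : IsOpen D) (hDconn : IsConnected D)
    (E G a : ℝ × ℝ → ℝ) (l n : ℝ × ℝ → E4)
    (hEpos : ∀ p ∈ D, 0 < E p)
    (hGpos : ∀ p ∈ D, 0 < G p)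
    (ha : ContDiffOn ℝ (⊤ : ℕ∞) a D)
    (hl : ContDiffOn ℝ (⊤ : ℕ∞) l D) (hn : ContDiffOn ℝ (⊤ : ℕ∞) n D)
    (hunit : ∀ p ∈ D, ⟪l p, l p⟫_ℝ = 1)
    (hEx : ∀ p ∈ D, ⟪pu l p, pu l p⟫_ℝ = E p)
    (hGy : ∀ p ∈ D, ⟪pv l p, pv l p⟫_ℝ = G p)
    (hF : ∀ p ∈ D, ⟪pu l p, pv l p⟫_ℝ = 0)
    (hn1 : ∀ p ∈ D, ⟪n p, n p⟫_ℝ = 1)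
    (hnl : ∀ p ∈ D, ⟪n p, l p⟫_ℝ = 0)
    (hnx : ∀ p ∈ D, ⟪n p, pu l p⟫_ℝ = 0)
    (hny : ∀ p ∈ D, ⟪n p, pv l p⟫_ℝ = 0)
    (hxx : ∀ p ∈ D, pu (pu l) p =
      (pu E p / (2 * E p)) • pu l p - (pv E p / (2 * E p)) • pv l p - E p • l p + a p • n p)
    (hxy : ∀ p ∈ D, pv (pu l) p =
      (pv E p / (2 * E p)) • pu l p + (pu G p / (2 * G p)) • pv l p)
    (hyy : ∀ p ∈ D, pv (pv l) p =
      -((pu G p / (2 * G p)) • pu l p) + (pv G p / (2 * G p)) • pv l p - G p • l p - a p • n p)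
    (hnx' : ∀ p ∈ D, pu n p = -((a p / E p) • pu l p))
    (hny' : ∀ p ∈ D, pv n p = (a p / G p) • pv l p) :
    (∀ p ∈ D, pu a p = 0 ∧ pv a p = 0 ∧
      (E p - G p) * pv E p = 0 ∧ (E p - G p) * pu G p = 0) ∧
    ∀ p ∈ D, ∀ q ∈ D, a p = a q := by
  have S : IsMinimalPrincipalParam D E G a l n :=
    ⟨hD, hEpos, hGpos, hl.of_le (WithTop.coe_le_coe.2 le_top), hn.differentiableOn (by simp),
      hunit, hEx, hGy, hF, hn1, hnl, hnx, hny, hxx, hxy, hyy, hnx', hny'⟩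
  refine ⟨fun p hp => ⟨S.pu_a_eq_zero hp, S.pv_a_eq_zero hp, S.sub_mul_pv_E_eq_zero hp,
    S.sub_mul_pu_G_eq_zero hp⟩, fun p hp q hq => ?_⟩
  exact eq_of_pu_eq_zero_of_pv_eq_zero hD hDconn.isPreconnected (ha.differentiableOn (by simp))
    (fun _ => S.pu_a_eq_zero) (fun _ => S.pv_a_eq_zero) hp hq

/-- for a minimal surface in `S³` parametrized by orthogonal principal lines
(first fundamental form `E dx² + G dy²`, normal coefficient `a`), the compatibility
conditions give `a_x = a_y = 0` (so `a` is constant on the connected domain) and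
`(E − G)·E_y = 0`, `(E − G)·G_x = 0` on `D`. -/
theorem stmt_5 (D : Set (ℝ × ℝ)) (hD : IsOpen D) (hDconn : IsConnected D)
    (E G a : ℝ × ℝ → ℝ) (l n : ℝ × ℝ → E4)
    (hE : ContDiffOn ℝ (⊤ : ℕ∞) E D) (hEpos : ∀ p ∈ D, 0 < E p)
    (hG : ContDiffOn ℝ (⊤ : ℕ∞) G D) (hGpos : ∀ p ∈ D, 0 < G p)
    (ha : ContDiffOn ℝ (⊤ : ℕ∞) a D)
    (hl : ContDiffOn ℝ (⊤ : ℕ∞) l D) (hn : ContDiffOn ℝ (⊤ : ℕ∞) n D)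
    (hunit : ∀ p ∈ D, ⟪l p, l p⟫_ℝ = 1)
    (hEx : ∀ p ∈ D, ⟪pu l p, pu l p⟫_ℝ = E p)
    (hGy : ∀ p ∈ D, ⟪pv l p, pv l p⟫_ℝ = G p)
    (hF : ∀ p ∈ D, ⟪pu l p, pv l p⟫_ℝ = 0)
    (hn1 : ∀ p ∈ D, ⟪n p, n p⟫_ℝ = 1)
    (hnl : ∀ p ∈ D, ⟪n p, l p⟫_ℝ = 0)
    (hnx : ∀ p ∈ D, ⟪n p, pu l p⟫_ℝ = 0)
    (hny : ∀ p ∈ D, ⟪n p, pv l p⟫_ℝ = 0)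
    (hxx : ∀ p ∈ D, pu (pu l) p =
      (pu E p / (2 * E p)) • pu l p - (pv E p / (2 * E p)) • pv l p - E p • l p + a p • n p)
    (hxy : ∀ p ∈ D, pv (pu l) p =
      (pv E p / (2 * E p)) • pu l p + (pu G p / (2 * G p)) • pv l p)
    (hyy : ∀ p ∈ D, pv (pv l) p =
      -((pu G p / (2 * G p)) • pu l p) + (pv G p / (2 * G p)) • pv l p - G p • l p - a p • n p)
    (hnx' : ∀ p ∈ D, pu n p = -((a p / E p) • pu l p))
    (hny' : ∀ p ∈ D, pv n p = (a p / G p) • pv l p) :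
    (∀ p ∈ D, pu a p = 0 ∧ pv a p = 0 ∧
      (E p - G p) * pv E p = 0 ∧ (E p - G p) * pu G p = 0) ∧
    ∀ p ∈ D, ∀ q ∈ D, a p = a q :=
  stmt_5_general D hD hDconn E G a l n hEpos hGpos ha hl hn hunit hEx hGy hF hn1 hnl hnx hny hxx hxy
    hyy hnx' hny'
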